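/- For every κ ∈ (0, 1/2) and every κ̄ ∈ (0, κ/2) there exists a constant C > 0 such that for every x ∈ ℝ³, all 0 < ε ≤ λ ≤ 1 and every ψ : ℝ³ → ℝ which is Lipschitz with Lipschitz constant at most 1, satisfies ‖ψ‖_∞ ≤ 1 and has support in the closed unit ball, one has ∫_ε^λ ∫_{ℝ³} δ^{-3/2-κ̄} ( sup_{η ∈ 𝒩} | ∫_{ℝ³} Ψ_ε^λ(v) η_u^δ(v) dv | ) du dδ ≤ C λ^{-1/2-κ} ε^{κ−κ̄}. -/

import Mathlib

open MeasureTheory Set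

/-- The grid cube `□_ε^y = {z : z - y ∈ [-ε/2, ε/2)³}` of side `ε` centred at `y`. -/
def gridCube (ε : ℝ) (y : EuclideanSpace ℝ (Fin 3)) : Set (EuclideanSpace ℝ (Fin 3)) :=
  {z | ∀ i : Fin 3, z i - y i ∈ Ico (-(ε / 2)) (ε / 2)}

/-- `latticeOf ε v` is the unique point `y ∈ εℤ³` with `v ∈ □_ε^y`. -/
noncomputable def latticeOf (ε : ℝ) (v : EuclideanSpace ℝ (Fin 3)) :
    EuclideanSpace ℝ (Fin 3) :=
  (EuclideanSpace.equiv (Fin 3) ℝ).symm fun i => ε * (⌊v i / ε + 1 / 2⌋ : ℤ)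

/-- The rescaled and recentred test function `f_x^λ(z) = λ⁻³ f((z - x)/λ)`. -/
noncomputable def scaledTest (f : EuclideanSpace ℝ (Fin 3) → ℝ)
    (x : EuclideanSpace ℝ (Fin 3)) (lam : ℝ) : EuclideanSpace ℝ (Fin 3) → ℝ :=
  fun z => (lam ^ 3)⁻¹ * f (lam⁻¹ • (z - x))

/-- `Ψ_ε^λ(v) = ψ_x^λ(v) - ε⁻³ ∫_{□_ε^{y_ε(v)}} ψ_x^λ(z) dz`, the difference between `ψ_x^λ`
and its average over the `ε`-grid cube containing the argument. -/
noncomputable def PsiDiff (ψ : EuclideanSpace ℝ (Fin 3) → ℝ)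
    (x : EuclideanSpace ℝ (Fin 3)) (lam ε : ℝ) : EuclideanSpace ℝ (Fin 3) → ℝ :=
  fun v => scaledTest ψ x lam v
    - (ε ^ 3)⁻¹ * ∫ z in gridCube ε (latticeOf ε v), scaledTest ψ x lam z

/-- The set `𝒩` of bounded measurable test functions supported in the closed Euclidean unit
ball and bounded by 1. -/
def testSet : Set (EuclideanSpace ℝ (Fin 3) → ℝ) :=
  {η | Measurable η ∧ (∀ v, |η v| ≤ 1) ∧ Function.support η ⊆ Metric.closedBall 0 1}

/-- The subset `𝒩₀ ⊆ 𝒩` of mean-zero test functions. -/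
def testSetZero : Set (EuclideanSpace ℝ (Fin 3) → ℝ) :=
  {η ∈ testSet | (∫ v, η v) = 0}

/-!
Write `f := ψ_x^λ`. Since `f` is `λ⁻⁴`-Lipschitz and a grid cube has diameter `√3 ε`, the
difference `Ψ_ε^λ` between `f` and its cube average is bounded by `√3 ε λ⁻⁴`, and it vanishes
outside the ball of radius `λ + √3 ε ≤ 3λ` around `x`. As `η_u^δ` has `L¹`-norm at most the volume
`4π/3` of the unit ball, the supremum over `η ∈ 𝒩` is at most `√3 ε λ⁻⁴ · 4π/3`, and it is zero once
`|u - x| > 4λ`. Integrating in `u` costs a factor `(4λ)³ · 4π/3`, and integrating `δ^{-3/2-κ̄}` over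
`δ > ε` a factor `2 ε^{-1/2-κ̄}`. Finally `ε^{1/2-κ̄} ≤ λ^{1/2-κ} ε^{κ-κ̄}` as `ε ≤ λ`, `κ ≤ 1/2`.
-/

open Real Metric

local notation "ℝ³" => EuclideanSpace ℝ (Fin 3)

theorem abs_sub_setAverage_le {α : Type*} [MeasurableSpace α] {μ : Measure α} {s : Set α}
    {f : α → ℝ} {v : α} {c : ℝ} (hs : MeasurableSet s) (hμ : μ s ≠ 0) (hμ₁ : μ s ≠ ⊤)
    (hf : AEStronglyMeasurable f (μ.restrict s)) (hc : ∀ z ∈ s, |f v - f z| ≤ c) :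
    |f v - ⨍ z in s, f z ∂μ| ≤ c := by
  have hint : IntegrableOn f s μ := by
    refine ⟨hf, .restrict_of_bounded (C := |f v| + c) hμ₁.lt_top
      (ae_restrict_of_forall_mem hs fun z hz => ?_)⟩
    have := hc z hz
    rw [Real.norm_eq_abs]
    linarith [abs_sub_abs_le_abs_sub (f z) (f v), abs_sub_comm (f z) (f v)]
  obtain ⟨z₁, hz₁, hle⟩ := exists_le_setAverage hμ hμ₁ hint
  obtain ⟨z₂, hz₂, hge⟩ := exists_setAverage_le hμ hμ₁ hint
  rw [abs_le]
  constructor <;> linarith [abs_le.1 (hc z₁ hz₁), abs_le.1 (hc z₂ hz₂)]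

theorem lintegral_ofReal_le_mul_measureReal {α : Type*} [MeasurableSpace α] {μ : Measure α}
    {F : α → ℝ} {s : Set α} {A : ℝ} (hs : MeasurableSet s) (hμs : μ s ≠ ⊤)
    (hin : ∀ u ∈ s, F u ≤ A) (hout : ∀ u ∉ s, F u ≤ 0) :
    ∫⁻ u, ENNReal.ofReal (F u) ∂μ ≤ ENNReal.ofReal (A * μ.real s) := by
  calc ∫⁻ u, ENNReal.ofReal (F u) ∂μ ≤ ∫⁻ u, s.indicator (fun _ => ENNReal.ofReal A) u ∂μ := by
        refine lintegral_mono fun u => ?_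
        by_cases hu : u ∈ s
        · simpa [hu] using ENNReal.ofReal_le_ofReal (hin u hu)
        · simp [hu, ENNReal.ofReal_eq_zero.2 (hout u hu)]
    _ = ENNReal.ofReal (A * μ.real s) := by
        rw [lintegral_indicator_const hs, ENNReal.ofReal_mul' measureReal_nonneg,
          ofReal_measureReal hμs]

theorem lintegral_Ioi_ofReal_rpow {c p : ℝ} (hc : 0 < c) (hp : p < -1) :
    ∫⁻ t in Ioi c, ENNReal.ofReal (t ^ p) = ENNReal.ofReal (-c ^ (p + 1) / (p + 1)) := by
  rw [← integral_Ioi_rpow_of_lt hp hc, ofReal_integral_eq_lintegral_ofReal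
    (integrableOn_Ioi_rpow_of_lt hp hc)]
  exact (ae_restrict_iff' measurableSet_Ioi).2
    (Filter.Eventually.of_forall fun t ht => Real.rpow_nonneg (hc.trans ht).le p)

theorem lintegral_Ioc_ofReal_rpow_mul_le {a b p K : ℝ} (ha : 0 < a) (hp : p < -1) (hK : 0 ≤ K) :
    ∫⁻ t in Ioc a b, ENNReal.ofReal (t ^ p * K) ≤ ENNReal.ofReal (-a ^ (p + 1) / (p + 1) * K) := by
  simp_rw [ENNReal.ofReal_mul' hK]
  rw [lintegral_mul_const' _ _ ENNReal.ofReal_ne_top, ← lintegral_Ioi_ofReal_rpow ha hp]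
  gcongr
  exact Ioc_subset_Ioi_self

theorem measureReal_closedBall_fin_three (x : ℝ³) {r : ℝ} (hr : 0 ≤ r) :
    volume.real (closedBall x r) = r ^ 3 * (π * 4 / 3) := by
  rw [measureReal_def, EuclideanSpace.volume_closedBall_fin_three, ENNReal.toReal_mul,
    ENNReal.toReal_pow, ENNReal.toReal_ofReal hr, ENNReal.toReal_ofReal (by positivity)]

section GridCube

theorem latticeOf_apply (ε : ℝ) (v : ℝ³) (i : Fin 3) :
    latticeOf ε v i = ε * (⌊v i / ε + 1 / 2⌋ : ℤ) := rfl

theorem mem_gridCube_latticeOf {ε : ℝ} (hε : 0 < ε) (v : ℝ³) :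
    v ∈ gridCube ε (latticeOf ε v) := by
  intro i
  rw [latticeOf_apply]
  set t := v i / ε
  have hv : v i = ε * t := by simp only [t]; field_simp
  have h1 : (⌊t + 1 / 2⌋ : ℝ) ≤ t + 1 / 2 := Int.floor_le _
  have h2 : t + 1 / 2 < ⌊t + 1 / 2⌋ + 1 := Int.lt_floor_add_one _
  rw [hv]
  constructor <;> nlinarith

theorem gridCube_eq_preimage (ε : ℝ) (y : ℝ³) :
    gridCube ε y = (MeasurableEquiv.toLp 2 (Fin 3 → ℝ)).symm ⁻¹'
      (univ.pi fun i => Ico (y i - ε / 2) (y i + ε / 2)) := by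
  ext z
  simp only [gridCube, mem_ofPred_eq, mem_preimage, mem_pi, mem_univ, forall_true_left, mem_Ico]
  refine forall_congr' fun i => ?_
  change _ ↔ y i - ε / 2 ≤ z i ∧ z i < y i + ε / 2
  constructor <;> intro h <;> constructor <;> linarith [h.1, h.2]

theorem measurableSet_gridCube (ε : ℝ) (y : ℝ³) : MeasurableSet (gridCube ε y) := by
  rw [gridCube_eq_preimage]
  exact (MeasurableEquiv.measurable _) (MeasurableSet.univ_pi fun _ => measurableSet_Ico)

theorem volume_gridCube {ε : ℝ} (hε : 0 ≤ ε) (y : ℝ³) :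
    volume (gridCube ε y) = ENNReal.ofReal (ε ^ 3) := by
  rw [gridCube_eq_preimage,
    (EuclideanSpace.volume_preserving_symm_measurableEquiv_toLp (Fin 3)).measure_preimage
      (MeasurableSet.univ_pi fun _ => measurableSet_Ico).nullMeasurableSet,
    volume_pi_pi]
  simp only [Real.volume_Ico, add_sub_sub_cancel, add_halves, Finset.prod_const,
    Finset.card_univ, Fintype.card_fin, ENNReal.ofReal_pow hε]

theorem dist_le_of_mem_gridCube {ε : ℝ} {y z v : ℝ³} (hz : z ∈ gridCube ε y)
    (hv : v ∈ gridCube ε y) : dist z v ≤ √3 * ε := by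
  have hcoord : ∀ i, dist (z i) (v i) ≤ ε := fun i => by
    rw [Real.dist_eq, abs_le]
    constructor <;> linarith [(hz i).1, (hz i).2, (hv i).1, (hv i).2]
  have hε : 0 ≤ ε := dist_nonneg.trans (hcoord 0)
  rw [EuclideanSpace.dist_eq, ← Real.sqrt_sq hε, ← Real.sqrt_mul (by norm_num)]
  gcongr
  calc ∑ i, dist (z i) (v i) ^ 2 ≤ ∑ _i : Fin 3, ε ^ 2 :=
        Finset.sum_le_sum fun i _ => pow_le_pow_left₀ dist_nonneg (hcoord i) 2
    _ = 3 * ε ^ 2 := by simp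

theorem gridCube_latticeOf_subset_closedBall {ε : ℝ} (hε : 0 < ε) (v : ℝ³) :
    gridCube ε (latticeOf ε v) ⊆ closedBall v (√3 * ε) := fun _ hz =>
  dist_le_of_mem_gridCube hz (mem_gridCube_latticeOf hε v)

end GridCube

section ScaledTest

variable {f : ℝ³ → ℝ} {x : ℝ³} {lam : ℝ}

theorem support_scaledTest_subset (hlam : 0 < lam)
    (hf : Function.support f ⊆ closedBall 0 1) :
    Function.support (scaledTest f x lam) ⊆ closedBall x lam := by
  intro z hz
  have hmem := hf (Function.support_mul_subset_right (fun _ => (lam ^ 3)⁻¹) _ hz)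
  rw [mem_closedBall_zero_iff, norm_smul, norm_inv, Real.norm_eq_abs, abs_of_pos hlam,
    inv_mul_le_iff₀ hlam, mul_one] at hmem
  exact mem_closedBall_iff_norm.2 hmem

theorem abs_scaledTest_le (hlam : 0 < lam) {M : ℝ} (hf : ∀ z, |f z| ≤ M) (z : ℝ³) :
    |scaledTest f x lam z| ≤ M / lam ^ 3 := by
  rw [scaledTest, abs_mul, abs_inv, abs_pow, abs_of_pos hlam, inv_mul_eq_div]
  gcongr
  exact hf _

theorem LipschitzWith.scaledTest {K : NNReal} (hf : LipschitzWith K f) (hlam : 0 < lam) :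
    LipschitzWith (K / lam.toNNReal ^ 4) (scaledTest f x lam) := by
  refine LipschitzWith.of_dist_le_mul fun a b => ?_
  have hdist := hf.dist_le_mul (lam⁻¹ • (a - x)) (lam⁻¹ • (b - x))
  rw [dist_smul₀, dist_sub_right, Real.norm_eq_abs, abs_inv, abs_of_pos hlam] at hdist
  push_cast [Real.coe_toNNReal _ hlam.le]
  calc dist (_root_.scaledTest f x lam a) (_root_.scaledTest f x lam b)
      = (lam ^ 3)⁻¹ * dist (f (lam⁻¹ • (a - x))) (f (lam⁻¹ • (b - x))) := by
        simp only [_root_.scaledTest, Real.dist_eq, ← mul_sub, abs_mul,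
          abs_of_pos (inv_pos.2 (pow_pos hlam 3))]
    _ ≤ (lam ^ 3)⁻¹ * (K * (lam⁻¹ * dist a b)) := by gcongr
    _ = K / lam ^ 4 * dist a b := by field_simp

end ScaledTest

/-- `sup_{η ∈ 𝒩} |∫ g η_u^δ|`, the quantity integrated in the Besov norm. -/
noncomputable def testSup (g : ℝ³ → ℝ) (u : ℝ³) (δ : ℝ) : ℝ :=
  ⨆ η ∈ testSet, |∫ v, g v * scaledTest η u δ v|

section TestSup

variable {g : ℝ³ → ℝ} {u : ℝ³} {δ : ℝ}

theorem abs_integral_mul_scaledTest_le (hδ : 0 < δ) {M : ℝ} (hg : ∀ v, |g v| ≤ M)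
    {η : ℝ³ → ℝ} (hη : η ∈ testSet) :
    |∫ v, g v * scaledTest η u δ v| ≤ M * (π * 4 / 3) := by
  have hvanish : ∀ v ∉ closedBall u δ, g v * scaledTest η u δ v = 0 := fun v hv => by
    rw [Function.notMem_support.1 fun h => hv (support_scaledTest_subset hδ hη.2.2 h), mul_zero]
  rw [← setIntegral_eq_integral_of_forall_compl_eq_zero hvanish, ← Real.norm_eq_abs]
  calc ‖∫ v in closedBall u δ, g v * scaledTest η u δ v‖
      ≤ M * (1 / δ ^ 3) * volume.real (closedBall u δ) := by
        refine norm_setIntegral_le_of_norm_le_const measure_closedBall_lt_top fun v _ => ?_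
        rw [Real.norm_eq_abs, abs_mul]
        exact mul_le_mul (hg v) (abs_scaledTest_le hδ hη.2.1 v) (abs_nonneg _)
          ((abs_nonneg _).trans (hg v))
    _ = M * (π * 4 / 3) := by
        rw [measureReal_closedBall_fin_three u hδ.le]
        field_simp

theorem testSup_le (hδ : 0 < δ) {M : ℝ} (hg : ∀ v, |g v| ≤ M) :
    testSup g u δ ≤ M * (π * 4 / 3) := by
  have hM : 0 ≤ M * (π * 4 / 3) := by
    have := (abs_nonneg _).trans (hg 0)
    positivity
  exact Real.iSup_le (fun η => Real.iSup_le (abs_integral_mul_scaledTest_le hδ hg) hM) hM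

theorem testSup_eq_zero_of_disjoint (hδ : 0 < δ)
    (hg : Disjoint (Function.support g) (closedBall u δ)) : testSup g u δ = 0 := by
  have hzero : ∀ η ∈ testSet, ∀ v, g v * scaledTest η u δ v = 0 := fun η hη v => by
    by_cases hv : v ∈ Function.support g
    · rw [Function.notMem_support.1 fun h =>
        hg.ne_of_mem hv (support_scaledTest_subset hδ hη.2.2 h) rfl, mul_zero]
    · rw [Function.notMem_support.1 hv, zero_mul]
  refine le_antisymm (Real.iSup_le (fun η => Real.iSup_le (fun hη => ?_) le_rfl) le_rfl)
    (Real.iSup_nonneg fun η => Real.iSup_nonneg fun _ => abs_nonneg _)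
  simp [hzero η hη]

end TestSup

section PsiDiff

variable {ψ : ℝ³ → ℝ} {x : ℝ³} {lam ε : ℝ}

theorem PsiDiff_eq_sub_setAverage (hε : 0 < ε) (v : ℝ³) :
    PsiDiff ψ x lam ε v =
      scaledTest ψ x lam v - ⨍ z in gridCube ε (latticeOf ε v), scaledTest ψ x lam z := by
  rw [setAverage_eq, measureReal_def, volume_gridCube hε.le, ENNReal.toReal_ofReal (by positivity),
    smul_eq_mul, PsiDiff]

theorem abs_PsiDiff_le {K : NNReal} (hψ : LipschitzWith K ψ) (hε : 0 < ε) (hlam : 0 < lam)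
    (v : ℝ³) : |PsiDiff ψ x lam ε v| ≤ K / lam ^ 4 * (√3 * ε) := by
  have hLip := hψ.scaledTest (x := x) hlam
  rw [PsiDiff_eq_sub_setAverage hε]
  refine abs_sub_setAverage_le (measurableSet_gridCube _ _)
    (by rw [volume_gridCube hε.le]; positivity) (by rw [volume_gridCube hε.le]; simp)
    hLip.continuous.aestronglyMeasurable fun z hz => ?_
  rw [← Real.dist_eq, dist_comm]
  calc dist (scaledTest ψ x lam z) (scaledTest ψ x lam v)
      ≤ (K / lam.toNNReal ^ 4 : NNReal) * dist z v := hLip.dist_le_mul z v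
    _ ≤ K / lam ^ 4 * (√3 * ε) := by
        push_cast [Real.coe_toNNReal _ hlam.le]
        gcongr
        exact gridCube_latticeOf_subset_closedBall hε v hz

theorem support_PsiDiff_subset (hψ : Function.support ψ ⊆ closedBall 0 1) (hε : 0 < ε)
    (hlam : 0 < lam) : Function.support (PsiDiff ψ x lam ε) ⊆ closedBall x (lam + √3 * ε) := by
  intro v hv
  by_contra hfar
  have hzero : ∀ z ∈ closedBall v (√3 * ε), scaledTest ψ x lam z = 0 := fun z hz =>
    Function.notMem_support.1 fun h => hfar <| by
      have := support_scaledTest_subset hlam hψ h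
      rw [mem_closedBall] at this hz ⊢
      linarith [dist_triangle v z x, dist_comm v z]
  refine hv ?_
  rw [PsiDiff, hzero v (mem_closedBall_self (by positivity)),
    setIntegral_eq_zero_of_forall_eq_zero fun z hz =>
      hzero z (gridCube_latticeOf_subset_closedBall hε v hz), mul_zero, sub_zero]

theorem lintegral_testSup_PsiDiff_le {K : NNReal} (hψ : LipschitzWith K ψ)
    (hsupp : Function.support ψ ⊆ closedBall 0 1) (hε : 0 < ε) (hεlam : ε ≤ lam) {δ c : ℝ}
    (hδ : 0 < δ) (hδlam : δ ≤ lam) (hc : 0 ≤ c) :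
    ∫⁻ u, ENNReal.ofReal (c * testSup (PsiDiff ψ x lam ε) u δ) ≤
      ENNReal.ofReal
        (c * (K / lam ^ 4 * (√3 * ε) * (π * 4 / 3)) * ((4 * lam) ^ 3 * (π * 4 / 3))) := by
  have hlam := hε.trans_le hεlam
  have hsqrt3 : √3 ≤ 2 := by
    nlinarith [Real.sq_sqrt (show (0 : ℝ) ≤ 3 by norm_num), Real.sqrt_nonneg 3]
  rw [← measureReal_closedBall_fin_three x (by positivity : 0 ≤ 4 * lam)]
  refine lintegral_ofReal_le_mul_measureReal measurableSet_closedBall measure_closedBall_lt_top.ne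
    (fun u _ => ?_) (fun u hu => ?_)
  · exact mul_le_mul_of_nonneg_left (testSup_le hδ (abs_PsiDiff_le hψ hε hlam)) hc
  · rw [mem_closedBall, not_le] at hu
    rw [testSup_eq_zero_of_disjoint hδ ((closedBall_disjoint_closedBall (by
      rw [dist_comm]; nlinarith)).mono_left (support_PsiDiff_subset hsupp hε hlam)), mul_zero]

end PsiDiff

theorem rpow_tail_mul_le {ε lam κ κb V : ℝ} (hε : 0 < ε) (hεlam : ε ≤ lam) (hκ : κ ≤ 1 / 2)
    (hκb : 0 < κb) :
    -ε ^ (-(3 : ℝ) / 2 - κb + 1) / (-(3 : ℝ) / 2 - κb + 1) *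
        (1 / lam ^ 4 * (√3 * ε) * V * ((4 * lam) ^ 3 * V)) ≤
      128 * √3 * V ^ 2 * lam ^ (-(1 : ℝ) / 2 - κ) * ε ^ (κ - κb) := by
  have hlam := hε.trans_le hεlam
  have hε' : ε ^ (-(3 : ℝ) / 2 - κb + 1) * ε = ε ^ ((1 : ℝ) / 2 - κ) * ε ^ (κ - κb) := by
    rw [← Real.rpow_add_one hε.ne', ← Real.rpow_add hε]
    ring_nf
  have hlam' : lam ^ ((1 : ℝ) / 2 - κ) = lam ^ (-(1 : ℝ) / 2 - κ) * lam := by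
    rw [← Real.rpow_add_one hlam.ne']
    ring_nf
  have hmono : ε ^ ((1 : ℝ) / 2 - κ) ≤ lam ^ ((1 : ℝ) / 2 - κ) :=
    Real.rpow_le_rpow hε.le hεlam (by linarith)
  calc -ε ^ (-(3 : ℝ) / 2 - κb + 1) / (-(3 : ℝ) / 2 - κb + 1) *
        (1 / lam ^ 4 * (√3 * ε) * V * ((4 * lam) ^ 3 * V))
      = 64 * √3 * V ^ 2 * (ε ^ (-(3 : ℝ) / 2 - κb + 1) * ε) / (lam * (1 / 2 + κb)) := by
        have : (-(3 : ℝ) / 2 - κb + 1) = -(1 / 2 + κb) := by ring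
        rw [this]
        field_simp
        ring
    _ ≤ 64 * √3 * V ^ 2 * (lam ^ ((1 : ℝ) / 2 - κ) * ε ^ (κ - κb)) / (lam * (1 / 2)) := by
        rw [hε']
        gcongr
        linarith
    _ = 128 * √3 * V ^ 2 * lam ^ (-(1 : ℝ) / 2 - κ) * ε ^ (κ - κb) := by
        rw [hlam']
        field_simp
        ring

/-- Intermediate regime (`ε ≤ δ ≤ λ`) of the Besov `B^{1/2+κ̄}_{1,1}` bound
on `Ψ_ε^λ`: testing against rescaled test functions `η_u^δ` at scales `ε ≤ δ ≤ λ` yields a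
total contribution of order `λ^{-1/2-κ} ε^{κ-κ̄}`. -/
theorem besov_bound_intermediate_scales :
    ∀ κ κb : ℝ, κ ∈ Ioo (0 : ℝ) (1 / 2) → κb ∈ Ioo (0 : ℝ) (κ / 2) →
      ∃ C : ℝ, 0 < C ∧
        ∀ (x : EuclideanSpace ℝ (Fin 3)) (ε lam : ℝ), 0 < ε → ε ≤ lam → lam ≤ 1 →
          ∀ ψ : EuclideanSpace ℝ (Fin 3) → ℝ,
            LipschitzWith 1 ψ → (∀ z, |ψ z| ≤ 1) →
            Function.support ψ ⊆ Metric.closedBall 0 1 →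
            (∫⁻ δ in Ioc ε lam, ∫⁻ u : EuclideanSpace ℝ (Fin 3),
                ENNReal.ofReal (δ ^ (-(3 : ℝ) / 2 - κb) *
                  ⨆ η ∈ testSet, |∫ v, PsiDiff ψ x lam ε v * scaledTest η u δ v|))
              ≤ ENNReal.ofReal (C * lam ^ (-(1 : ℝ) / 2 - κ) * ε ^ (κ - κb)) := by
  intro κ κb hκ hκb
  refine ⟨128 * √3 * (π * 4 / 3) ^ 2, by positivity, ?_⟩
  intro x ε lam hε hεlam _ ψ hψ _ hsupp
  have hlam := hε.trans_le hεlam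
  have hp : -(3 : ℝ) / 2 - κb < -1 := by linarith [hκb.1]
  calc (∫⁻ δ in Ioc ε lam, ∫⁻ u, ENNReal.ofReal (δ ^ (-(3 : ℝ) / 2 - κb) *
          testSup (PsiDiff ψ x lam ε) u δ))
      ≤ ∫⁻ δ in Ioc ε lam, ENNReal.ofReal (δ ^ (-(3 : ℝ) / 2 - κb) *
          (1 / lam ^ 4 * (√3 * ε) * (π * 4 / 3) * ((4 * lam) ^ 3 * (π * 4 / 3)))) := by
        refine setLIntegral_mono' measurableSet_Ioc fun δ hδ => ?_
        have hδ0 := hε.trans hδ.1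
        simpa only [NNReal.coe_one, mul_assoc] using
          lintegral_testSup_PsiDiff_le hψ hsupp hε hεlam hδ0 hδ.2 (Real.rpow_nonneg hδ0.le _)
    _ ≤ _ := lintegral_Ioc_ofReal_rpow_mul_le hε hp (by positivity)
    _ ≤ _ := ENNReal.ofReal_le_ofReal (rpow_tail_mul_le hε hεlam hκ.2.le hκb.1)
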